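/- arXiv:2508.10886 — 8 statements merged into one kernel-verified Lean document; each statement's English description precedes it below -/
import Mathlib

section
/- Let f : X → Y be a continuous map of topological spaces with finite fibers, and let B be a closed basis for the topology on X. If f(C₁ ∩ ⋯ ∩ Cₙ) is closed for any finite collection C₁,…,Cₙ ∈ B, then f is a closed map. -/
/-- Let `f : X → Y` be a continuous map with finite fibers, and `B`
a closed basis for `X` (the complements of members of `B` form an open basis).
If `f '' (C₁ ∩ ⋯ ∩ Cₙ)` is closed for every finite collection of members of `B`,
then `f` is a closed map. -/
theorem stmt0 {X Y : Type*} [TopologicalSpace X] [TopologicalSpace Y]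
    (f : X → Y) (hf : Continuous f) (hfib : ∀ y : Y, (f ⁻¹' {y}).Finite)
    (B : Set (Set X)) (hBclosed : ∀ C ∈ B, IsClosed C)
    (hBbasis : TopologicalSpace.IsTopologicalBasis ((fun C => Cᶜ) '' B))
    (himg : ∀ s : Finset (Set X), ↑s ⊆ B → IsClosed (f '' ⋂₀ ↑s)) :
    IsClosedMap f := by
  intro C hC
  rw [← isOpen_compl_iff, isOpen_iff_forall_mem_open]
  intro y hy
  have key : ∀ x ∈ f ⁻¹' {y}, ∃ D ∈ B, x ∉ D ∧ C ⊆ D := by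
    intro x hx
    have hxC : x ∉ C := fun h => hy ⟨x, h, hx⟩
    obtain ⟨U, hU, hxU, hUsub⟩ :=
      hBbasis.exists_subset_of_mem_open hxC hC.isOpen_compl
    obtain ⟨D, hDB, rfl⟩ := hU
    exact ⟨D, hDB, fun h => hxU h, fun z hz => by
      by_contra hzD
      exact (hUsub hzD) hz⟩
  choose! D hDB hxD hCD using key
  have hfin : (D '' (f ⁻¹' {y})).Finite := (hfib y).image D
  set s : Finset (Set X) := hfin.toFinset with hs
  have hscoe : (↑s : Set (Set X)) = D '' (f ⁻¹' {y}) := hfin.coe_toFinset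
  have hsB : (↑s : Set (Set X)) ⊆ B := by
    rw [hscoe]
    rintro _ ⟨x, hx, rfl⟩
    exact hDB x hx
  have hclosed := himg s hsB
  refine ⟨(f '' ⋂₀ ↑s)ᶜ, ?_, hclosed.isOpen_compl, ?_⟩
  · intro z hz hzC
    obtain ⟨x, hxC, rfl⟩ := hzC
    exact hz ⟨x, fun t ht => by
      rw [hscoe] at ht
      obtain ⟨w, hw, rfl⟩ := ht
      exact hCD w hw hxC, rfl⟩
  · rintro ⟨x, hxI, hxy⟩
    have hxfib : x ∈ f ⁻¹' {y} := hxy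
    exact hxD x hxfib (hxI (D x) (by rw [hscoe]; exact ⟨x, hxfib, rfl⟩))
end

section
/- Let T be a totally separated topological space admitting a basis of open sets each of which has finite boundary. Then T is zero-dimensional, i.e., T admits a basis of clopen sets. -/
/-- A totally separated space admitting a basis of open sets, each
with finite boundary, is zero-dimensional: it has a basis of clopen sets. -/
theorem stmt2 {T : Type*} [TopologicalSpace T] [TotallySeparatedSpace T]
    (B : Set (Set T)) (hB : TopologicalSpace.IsTopologicalBasis B)
    (hfin : ∀ U ∈ B, (frontier U).Finite) :
    ∃ C : Set (Set T), TopologicalSpace.IsTopologicalBasis C ∧ ∀ U ∈ C, IsClopen U := by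
  refine ⟨{U | IsClopen U}, ?_, fun U hU => hU⟩
  refine TopologicalSpace.isTopologicalBasis_of_isOpen_of_nhds (fun U hU => hU.isOpen) ?_
  intro x U hxU hU
  obtain ⟨V, hVB, hxV, hVU⟩ := hB.exists_subset_of_mem_open hxU hU
  have hVopen : IsOpen V := hB.isOpen hVB
  have hF : (frontier V).Finite := hfin V hVB
  have hdisj : ∀ y ∈ frontier V, y ∉ V := by
    intro y hy
    rw [hVopen.frontier_eq] at hy
    exact hy.2
  have hex : ∀ y ∈ frontier V, ∃ W : Set T, IsClopen W ∧ x ∈ W ∧ y ∈ Wᶜ := by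
    intro y hy
    exact exists_isClopen_of_totally_separated (fun h => hdisj y hy (h ▸ hxV))
  choose! W hW using hex
  set K : Set T := ⋂ y ∈ frontier V, W y with hK
  have hKclopen : IsClopen K := hF.isClopen_biInter (fun y hy => (hW y hy).1)
  have hxK : x ∈ K := Set.mem_iInter₂.mpr fun y hy => (hW y hy).2.1
  refine ⟨V ∩ K, ?_, ⟨hxV, hxK⟩, (Set.inter_subset_left).trans hVU⟩
  constructor
  · -- closed
    rw [← isOpen_compl_iff, isOpen_iff_mem_nhds]
    intro z hz
    rcases Classical.em (z ∈ K) with hzK | hzK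
    · have hzV : z ∉ closure V := by
        intro hzc
        rcases Classical.em (z ∈ V) with h | h
        · exact hz ⟨h, hzK⟩
        · have hzF : z ∈ frontier V := by rw [hVopen.frontier_eq]; exact ⟨hzc, h⟩
          exact (hW z hzF).2.2 (Set.mem_iInter₂.mp hzK z hzF)
      have : (closure V)ᶜ ∈ nhds z := (isClosed_closure).isOpen_compl.mem_nhds hzV
      exact Filter.mem_of_superset this fun w hw => fun hww =>
        hw (subset_closure hww.1)
    · have : Kᶜ ∈ nhds z := hKclopen.1.isOpen_compl.mem_nhds hzK
      exact Filter.mem_of_superset this fun w hw => fun hww => hw hww.2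
  · exact hVopen.inter hKclopen.2
end

section
/- Every countable, second-countable, metrizable topological space with no isolated points is homeomorphic to ℚ with its order topology. -/
open Set Metric Filter Topology TopologicalSpace Cardinal

namespace Stmt3

variable {X : Type*} [MetricSpace X] [Countable X]

lemma not_countable_Ioo {a b : ℝ} (hab : a < b) : ¬ (Set.Ioo a b).Countable := by
  intro h
  have h1 : #(Set.Ioo a b) ≤ Cardinal.aleph0 :=
    Cardinal.mk_le_aleph0_iff.mpr (Set.countable_coe_iff.mpr h)
  rw [Cardinal.mk_Ioo_real hab] at h1
  exact absurd h1 (not_le.mpr Cardinal.aleph0_lt_continuum)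

lemma exists_clopen_ball (x : X) {a b : ℝ} (hab : a < b) :
    ∃ r, a < r ∧ r < b ∧ IsClopen (ball x r) := by
  have hcnt : (Set.range (dist x)).Countable := Set.countable_range _
  have : ¬ (Set.Ioo a b ⊆ Set.range (dist x)) := fun h =>
    not_countable_Ioo hab (hcnt.mono h)
  obtain ⟨r, hr, hr2⟩ := Set.not_subset.mp this
  refine ⟨r, hr.1, hr.2, ?_, isOpen_ball⟩
  have : closedBall x r = ball x r := by
    apply Set.Subset.antisymm
    · intro y hy
      rcases lt_or_eq_of_le (mem_closedBall.mp hy) with h | h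
      · exact h
      · exact absurd ⟨y, (dist_comm x y).trans h⟩ hr2
    · exact ball_subset_closedBall
  rw [← this]
  exact Metric.isClosed_closedBall

lemma infinite_of_isOpen (hiso : ∀ x : X, (𝓝[≠] x).NeBot) {U : Set X} (hU : IsOpen U)
    (hne : U.Nonempty) : U.Infinite := by
  intro hf
  obtain ⟨x, hx⟩ := hne
  have h1 : IsClosed (U \ {x}) := (hf.subset diff_subset).isClosed
  have h2 : IsOpen ({x} : Set X) := by
    have : ({x} : Set X) = U ∩ (U \ {x})ᶜ := by
      ext y; by_cases hy : y = x <;> simp [hy, hx]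
    rw [this]; exact hU.inter h1.isOpen_compl
  have hmem : {x} ∈ 𝓝[≠] x := mem_nhdsWithin_of_mem_nhds (h2.mem_nhds rfl)
  have hmem2 : {x}ᶜ ∈ 𝓝[≠] x := self_mem_nhdsWithin
  have : (∅ : Set X) ∈ 𝓝[≠] x := by
    have := inter_mem hmem hmem2
    simpa using this
  exact absurd (Filter.empty_mem_iff_bot.mp this) (hiso x).ne

/-- All pairs of points of `S` are within `ε`. -/
def small (ε : ℝ) (S : Set X) : Prop := ∀ p ∈ S, ∀ q ∈ S, dist p q ≤ ε

lemma shave (hiso : ∀ x : X, (𝓝[≠] x).NeBot) {U : Set X} (hU : IsOpen U) (hne : U.Nonempty)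
    {ε : ℝ} (hε : 0 < ε) (z : X) :
    ∃ V : Set X, IsOpen V ∧ V.Nonempty ∧ small ε V ∧ V ⊆ U ∧ (z ∈ U → z ∈ V) ∧
      IsOpen (U \ V) ∧ (U \ V).Nonempty := by
  classical
  set c : X := if z ∈ U then z else hne.choose with hc
  have hcU : c ∈ U := by
    by_cases h : z ∈ U <;> simp [hc, h, hne.choose_spec]
  obtain ⟨y, hyU, hyc⟩ : ∃ y ∈ U, y ≠ c := by
    have := (infinite_of_isOpen hiso hU hne).diff (Set.finite_singleton c)
    obtain ⟨y, hy⟩ := this.nonempty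
    exact ⟨y, hy.1, hy.2⟩
  have hpos : 0 < min (ε/2) (dist y c) := lt_min (by linarith) (dist_pos.mpr hyc)
  obtain ⟨r, hr0, hr1, hr2⟩ := exists_clopen_ball c hpos
  refine ⟨ball c r ∩ U, isOpen_ball.inter hU, ⟨c, mem_ball_self hr0, hcU⟩, ?_,
    inter_subset_right, ?_, ?_, ⟨y, hyU, ?_⟩⟩
  · intro p hp q hq
    have h1 : dist p c < r := hp.1
    have h2 : dist q c < r := hq.1
    have : r ≤ ε/2 := le_of_lt (lt_of_lt_of_le hr1 (min_le_left _ _))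
    calc dist p q ≤ dist p c + dist c q := dist_triangle _ _ _
      _ ≤ ε/2 + ε/2 := by rw [dist_comm c q]; linarith
      _ = ε := by ring
  · intro hz
    have hcz : c = z := by simp [hc, hz]
    exact ⟨by rw [← hcz]; exact mem_ball_self hr0, hz⟩
  · have : U \ (ball c r ∩ U) = U ∩ (ball c r)ᶜ := by ext p; simp only [Set.mem_diff, Set.mem_inter_iff, Set.mem_compl_iff]; tauto
    rw [this]; exact hU.inter hr2.1.isOpen_compl
  · intro hy2
    have h1 : dist y c < r := hy2.1
    have h2 : r < dist y c := lt_of_lt_of_le hr1 (min_le_right _ _)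
    linarith


lemma partition_nat (hiso : ∀ x : X, (𝓝[≠] x).NeBot) [Nonempty X] {U : Set X} (hU : IsOpen U)
    (hne : U.Nonempty) {ε : ℝ} (hε : 0 < ε) :
    ∃ V : ℕ → Set X, (∀ n, IsOpen (V n)) ∧ (∀ n, (V n).Nonempty) ∧ (∀ n, small ε (V n)) ∧
      (∀ m n, m ≠ n → Disjoint (V m) (V n)) ∧ (⋃ n, V n) = U := by
  classical
  obtain ⟨e, he⟩ := exists_surjective_nat X
  -- step function via choice
  have step : ∀ (n : ℕ) (W : Set X), IsOpen W → W.Nonempty →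
      ∃ V : Set X, IsOpen V ∧ V.Nonempty ∧ small ε V ∧ V ⊆ W ∧ (e n ∈ W → e n ∈ V) ∧
        IsOpen (W \ V) ∧ (W \ V).Nonempty := fun n W hW hWne => shave hiso hW hWne hε (e n)
  choose! F h1 h2 h3 h4 h5 h6 h7 using step
  -- the decreasing sequence of remainders
  let W : ℕ → Set X := fun n => Nat.rec U (fun k Wk => Wk \ F k Wk) n
  have hW0 : W 0 = U := rfl
  have hWsucc : ∀ n, W (n + 1) = W n \ F n (W n) := fun n => rfl
  have hWinv : ∀ n, IsOpen (W n) ∧ (W n).Nonempty := by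
    intro n
    induction n with
    | zero => exact ⟨hU, hne⟩
    | succ k ih =>
      rw [hWsucc]
      exact ⟨h6 k (W k) ih.1 ih.2, h7 k (W k) ih.1 ih.2⟩
  set V : ℕ → Set X := fun n => F n (W n) with hV
  have hVW : ∀ n, V n ⊆ W n := fun n => h4 n (W n) (hWinv n).1 (hWinv n).2
  have hWmono : ∀ n, W (n + 1) ⊆ W n := fun n => by rw [hWsucc]; exact diff_subset
  have hWle : ∀ {m n : ℕ}, m ≤ n → W n ⊆ W m := by
    intro m n h
    induction h with
    | refl => exact subset_rfl
    | step h ih => exact (hWmono _).trans ih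
  have hdisj : ∀ m n, m ≠ n → Disjoint (V m) (V n) := by
    have key : ∀ m n, m < n → Disjoint (V m) (V n) := by
      intro m n hmn
      have : V n ⊆ W n := hVW n
      have h2' : W n ⊆ W (m + 1) := hWle hmn
      have : V n ⊆ W m \ V m := (hVW n).trans (by rw [← hWsucc]; exact h2')
      exact Disjoint.mono_right this disjoint_sdiff_self_right
    intro m n hmn
    rcases lt_or_gt_of_ne hmn with h | h
    · exact key m n h
    · exact (key n m h).symm
  refine ⟨V, fun n => h1 n (W n) (hWinv n).1 (hWinv n).2,
    fun n => h2 n (W n) (hWinv n).1 (hWinv n).2,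
    fun n => h3 n (W n) (hWinv n).1 (hWinv n).2, hdisj, ?_⟩
  apply Set.Subset.antisymm
  · exact Set.iUnion_subset fun n => (hVW n).trans (hWle (Nat.zero_le n))
  · intro p hp
    by_contra hcon
    have hpW : ∀ n, p ∈ W n := by
      intro n
      induction n with
      | zero => exact hp
      | succ k ih =>
        rw [hWsucc]
        refine ⟨ih, fun hmem => hcon ?_⟩
        exact Set.mem_iUnion.mpr ⟨k, hmem⟩
    obtain ⟨m, rfl⟩ := he p
    exact hcon (Set.mem_iUnion.mpr ⟨m, h5 m (W m) (hWinv m).1 (hWinv m).2 (hpW m)⟩)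

lemma partition_int (hiso : ∀ x : X, (𝓝[≠] x).NeBot) [Nonempty X] {U : Set X} (hU : IsOpen U)
    (hne : U.Nonempty) {ε : ℝ} (hε : 0 < ε) :
    ∃ V : ℤ → Set X, (∀ n, IsOpen (V n)) ∧ (∀ n, (V n).Nonempty) ∧ (∀ n, small ε (V n)) ∧
      (∀ m n, m ≠ n → Disjoint (V m) (V n)) ∧ (⋃ n, V n) = U := by
  obtain ⟨V, hV1, hV2, hV3, hV4, hV5⟩ := partition_nat hiso hU hne hε
  have eqv : ℤ ≃ ℕ := Denumerable.eqv ℤ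
  refine ⟨fun i => V (eqv i), fun i => hV1 _, fun i => hV2 _, fun i => hV3 _,
    fun i j hij => hV4 _ _ fun h => hij (eqv.injective h), ?_⟩
  rw [← hV5]
  exact eqv.surjective.iUnion_comp V

section Scheme

variable [Nonempty X] (hiso : ∀ x : X, (𝓝[≠] x).NeBot)

open Classical in
/-- Children of a node: a partition into countably many nonempty open small pieces. -/
noncomputable def kids (ε : ℝ) (S : Set X) : ℤ → Set X :=
  if h : IsOpen S ∧ S.Nonempty ∧ 0 < ε then (partition_int hiso h.1 h.2.1 h.2.2).choose
  else fun _ => ∅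

lemma kids_spec {ε : ℝ} {S : Set X} (h1 : IsOpen S) (h2 : S.Nonempty) (h3 : 0 < ε) :
    (∀ i, IsOpen (kids hiso ε S i)) ∧ (∀ i, (kids hiso ε S i).Nonempty) ∧
      (∀ i, small ε (kids hiso ε S i)) ∧
      (∀ i j, i ≠ j → Disjoint (kids hiso ε S i) (kids hiso ε S j)) ∧
      (⋃ i, kids hiso ε S i) = S := by
  classical
  rw [kids, dif_pos ⟨h1, h2, h3⟩]
  exact (partition_int hiso h1 h2 h3).choose_spec

/-- The node of the scheme indexed by a (reversed) list of integers. -/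
noncomputable def node : List ℤ → Set X
  | [] => Set.univ
  | i :: t => kids hiso ((1/2 : ℝ) ^ (t.length + 1)) (node t) i

lemma node_basic : ∀ t : List ℤ, IsOpen (node hiso t) ∧ (node hiso t).Nonempty := by
  intro t
  induction t with
  | nil => exact ⟨isOpen_univ, Set.univ_nonempty⟩
  | cons i t ih =>
    have := kids_spec hiso ih.1 ih.2 (show (0:ℝ) < (1/2)^(t.length+1) by positivity)
    exact ⟨this.1 i, this.2.1 i⟩

lemma node_small (i : ℤ) (t : List ℤ) :
    small ((1/2 : ℝ) ^ (t.length + 1)) (node hiso (i :: t)) :=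
  (kids_spec hiso (node_basic hiso t).1 (node_basic hiso t).2 (by positivity)).2.2.1 i

lemma node_iUnion (t : List ℤ) : (⋃ i, node hiso (i :: t)) = node hiso t :=
  (kids_spec hiso (node_basic hiso t).1 (node_basic hiso t).2
    (show (0:ℝ) < (1/2)^(t.length+1) by positivity)).2.2.2.2

lemma node_subset (i : ℤ) (t : List ℤ) : node hiso (i :: t) ⊆ node hiso t := by
  rw [← node_iUnion hiso t]
  exact Set.subset_iUnion (fun j => node hiso (j :: t)) i

lemma node_disjoint {i j : ℤ} (t : List ℤ) (hij : i ≠ j) :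
    Disjoint (node hiso (i :: t)) (node hiso (j :: t)) :=
  (kids_spec hiso (node_basic hiso t).1 (node_basic hiso t).2
    (show (0:ℝ) < (1/2)^(t.length+1) by positivity)).2.2.2.1 i j hij

open Classical in
/-- The chain of nodes containing a point, as reversed index lists. -/
noncomputable def chain (x : X) : ℕ → List ℤ
  | 0 => []
  | n + 1 =>
    (if h : ∃ i, x ∈ node hiso (i :: chain x n) then h.choose else 0) :: chain x n

/-- The branch indices of a point. -/
noncomputable def bidx (x : X) (n : ℕ) : ℤ := (chain hiso x (n + 1)).headI

lemma chain_succ (x : X) (n : ℕ) :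
    chain hiso x (n + 1) = bidx hiso x n :: chain hiso x n := rfl

lemma chain_length (x : X) (n : ℕ) : (chain hiso x n).length = n := by
  induction n with
  | zero => rfl
  | succ k ih => rw [chain_succ]; simp [ih]

lemma chain_mem (x : X) (n : ℕ) : x ∈ node hiso (chain hiso x n) := by
  induction n with
  | zero => exact Set.mem_univ x
  | succ k ih =>
    have hex : ∃ i, x ∈ node hiso (i :: chain hiso x k) := by
      rw [← node_iUnion hiso (chain hiso x k)] at ih
      exact Set.mem_iUnion.mp ih
    have : chain hiso x (k + 1) = hex.choose :: chain hiso x k := by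
      rw [chain, dif_pos hex]
    rw [this]
    exact hex.choose_spec

lemma chain_unique (x : X) : ∀ t : List ℤ, x ∈ node hiso t → chain hiso x t.length = t := by
  intro t
  induction t with
  | nil => intro _; rfl
  | cons i t ih =>
    intro hx
    have ht : chain hiso x t.length = t := ih (node_subset hiso i t hx)
    have hlen : (i :: t).length = t.length + 1 := rfl
    rw [hlen, chain_succ, ht]
    congr 1
    by_contra hne
    have hx2 : x ∈ node hiso (bidx hiso x t.length :: t) := by
      have := chain_mem hiso x (t.length + 1)
      rwa [chain_succ, ht] at this
    exact (node_disjoint hiso t hne).ne_of_mem hx2 hx rfl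

lemma chain_eq_iff (x y : X) (n : ℕ) :
    chain hiso x n = chain hiso y n ↔ ∀ m < n, bidx hiso x m = bidx hiso y m := by
  induction n with
  | zero => simp [chain]
  | succ k ih =>
    rw [chain_succ, chain_succ]
    constructor
    · rintro h m hm
      have h1 : bidx hiso x k = bidx hiso y k := (List.cons.injEq _ _ _ _ ▸ h).1
      have h2 := ih.mp (List.cons.injEq _ _ _ _ ▸ h).2
      rcases Nat.lt_succ_iff_lt_or_eq.mp hm with h' | rfl
      · exact h2 m h'
      · exact h1
    · intro h
      rw [ih.mpr fun m hm => h m (hm.trans (Nat.lt_succ_self k)), h k (Nat.lt_succ_self k)]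

lemma eq_of_bidx_eq {x y : X} (h : ∀ n, bidx hiso x n = bidx hiso y n) : x = y := by
  have hchain : ∀ n, chain hiso x n = chain hiso y n := fun n =>
    (chain_eq_iff hiso x y n).mpr fun m _ => h m
  have hd : ∀ n : ℕ, dist x y ≤ (1/2 : ℝ) ^ (n + 1) := by
    intro n
    have hx := chain_mem hiso x (n + 1)
    have hy := chain_mem hiso y (n + 1)
    rw [hchain (n+1)] at hx
    rw [chain_succ] at hx hy
    have := node_small hiso (bidx hiso y n) (chain hiso y n)
    rw [chain_length] at this
    exact this x hx y hy
  have h0 : dist x y ≤ 0 := by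
    have htt : Filter.Tendsto (fun n : ℕ => (1/2 : ℝ) ^ (n+1)) Filter.atTop (nhds 0) :=
      (tendsto_pow_atTop_nhds_zero_of_lt_one (by norm_num) (by norm_num)).comp
        (Filter.tendsto_add_atTop_nat 1)
    exact ge_of_tendsto htt (Filter.Eventually.of_forall hd)
  exact dist_le_zero.mp h0

end Scheme

lemma haux [Nonempty X] (hiso : ∀ x : X, (𝓝[≠] x).NeBot) (x : X) (n : ℕ) (d : ℤ) :
    ∃ z : X, chain hiso z n = chain hiso x n ∧ bidx hiso z n = d := by
  obtain ⟨z, hz⟩ := (node_basic hiso (d :: chain hiso x n)).2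
  have hu := chain_unique hiso z _ hz
  have hlen : (d :: chain hiso x n).length = n + 1 := by simp [chain_length]
  rw [hlen, chain_succ] at hu
  exact ⟨z, (List.cons.injEq _ _ _ _ ▸ hu).2, (List.cons.injEq _ _ _ _ ▸ hu).1⟩

lemma key {X : Type*} [MetricSpace X] [Countable X] [Nonempty X]
    (hiso : ∀ x : X, (𝓝[≠] x).NeBot) : Nonempty (X ≃ₜ ℚ) := by
  classical
  set b : X → ℕ → ℤ := bidx hiso with hb
  have hinj : Function.Injective (fun x : X => toLex (b x)) := by
    intro x y h
    exact eq_of_bidx_eq hiso (fun n => congrFun (toLex.injective h) n)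
  letI lo : LinearOrder X := LinearOrder.lift' (fun x : X => toLex (b x)) hinj
  have hlt : ∀ x y : X, x < y ↔ ∃ n, (∀ m < n, b x m = b y m) ∧ b x n < b y n :=
    fun x y => Iff.rfl
  -- comparisons from chains
  have hceq : ∀ (x y : X) (n : ℕ), chain hiso x n = chain hiso y n ↔
      ∀ m < n, b x m = b y m := fun x y n => chain_eq_iff hiso x y n
  -- bigger and smaller elements with prescribed chains
  have haux' : ∀ (x : X) (n : ℕ) (d : ℤ), ∃ z : X,
      (∀ m < n, b z m = b x m) ∧ b z n = d := by
    intro x n d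
    obtain ⟨z, hz1, hz2⟩ := haux hiso x n d
    exact ⟨z, (hceq z x n).mp hz1, hz2⟩
  letI : NoMaxOrder X := by
    constructor
    intro x
    obtain ⟨z, hz1, hz2⟩ := haux' x 0 (b x 0 + 1)
    exact ⟨z, (hlt x z).mpr ⟨0, fun m hm => absurd hm (Nat.not_lt_zero m),
      by rw [hz2]; exact lt_add_one _⟩⟩
  letI : NoMinOrder X := by
    constructor
    intro x
    obtain ⟨z, hz1, hz2⟩ := haux' x 0 (b x 0 - 1)
    exact ⟨z, (hlt z x).mpr ⟨0, fun m hm => absurd hm (Nat.not_lt_zero m),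
      by rw [hz2]; exact sub_one_lt _⟩⟩
  letI : DenselyOrdered X := by
    constructor
    intro x y hxy
    obtain ⟨n, hn1, hn2⟩ := (hlt x y).mp hxy
    obtain ⟨z, hz1, hz2⟩ := haux' x (n + 1) (b x (n + 1) + 1)
    refine ⟨z, (hlt x z).mpr ⟨n + 1, fun m hm => (hz1 m hm).symm,
      by rw [hz2]; exact lt_add_one _⟩, (hlt z y).mpr ⟨n, fun m hm => ?_, ?_⟩⟩
    · rw [hz1 m (hm.trans (Nat.lt_succ_self n)), hn1 m hm]
    · rw [hz1 n (Nat.lt_succ_self n)]; exact hn2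
  -- the order topology agrees with the metric topology
  set rays : Set (Set X) := {s : Set X | ∃ a, s = Set.Ioi a ∨ s = Set.Iio a} with hrays
  -- rays are metric-open
  have hIio : ∀ x : X, Set.Iio x =
      ⋃ (n : ℕ), ⋃ (i : ℤ), ⋃ (_ : i < b x n), node hiso (i :: chain hiso x n) := by
    intro x
    ext y
    simp only [Set.mem_Iio, Set.mem_iUnion]
    constructor
    · intro hyx
      obtain ⟨n, hn1, hn2⟩ := (hlt y x).mp hyx
      refine ⟨n, b y n, hn2, ?_⟩
      have : chain hiso y n = chain hiso x n := (hceq y x n).mpr hn1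
      rw [← this, ← chain_succ]
      exact chain_mem hiso y (n + 1)
    · rintro ⟨n, i, hi, hmem⟩
      have hu := chain_unique hiso y _ hmem
      have hlen : (i :: chain hiso x n).length = n + 1 := by simp [chain_length]
      rw [hlen, chain_succ] at hu
      have h1 : b y n = i := (List.cons.injEq _ _ _ _ ▸ hu).1
      have h2 : chain hiso y n = chain hiso x n := (List.cons.injEq _ _ _ _ ▸ hu).2
      exact (hlt y x).mpr ⟨n, (hceq y x n).mp h2, h1 ▸ hi⟩
  have hIoi : ∀ x : X, Set.Ioi x =
      ⋃ (n : ℕ), ⋃ (i : ℤ), ⋃ (_ : b x n < i), node hiso (i :: chain hiso x n) := by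
    intro x
    ext y
    simp only [Set.mem_Ioi, Set.mem_iUnion]
    constructor
    · intro hyx
      obtain ⟨n, hn1, hn2⟩ := (hlt x y).mp hyx
      refine ⟨n, b y n, hn2, ?_⟩
      have : chain hiso y n = chain hiso x n := (hceq y x n).mpr fun m hm => (hn1 m hm).symm
      rw [← this, ← chain_succ]
      exact chain_mem hiso y (n + 1)
    · rintro ⟨n, i, hi, hmem⟩
      have hu := chain_unique hiso y _ hmem
      have hlen : (i :: chain hiso x n).length = n + 1 := by simp [chain_length]
      rw [hlen, chain_succ] at hu
      have h1 : b y n = i := (List.cons.injEq _ _ _ _ ▸ hu).1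
      have h2 : chain hiso y n = chain hiso x n := (List.cons.injEq _ _ _ _ ▸ hu).2
      exact (hlt x y).mpr ⟨n, fun m hm => ((hceq y x n).mp h2 m hm).symm, h1 ▸ hi⟩
  have hraysOpen : ∀ s ∈ rays, IsOpen s := by
    rintro s ⟨a, rfl | rfl⟩
    · rw [hIoi a]
      exact isOpen_iUnion fun n => isOpen_iUnion fun i => isOpen_iUnion fun _ =>
        (node_basic hiso _).1
    · rw [hIio a]
      exact isOpen_iUnion fun n => isOpen_iUnion fun i => isOpen_iUnion fun _ =>
        (node_basic hiso _).1
  -- every node is open in the order topology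
  have hnodeGen : ∀ (i : ℤ) (t : List ℤ), GenerateOpen rays (node hiso (i :: t)) := by
    intro i t
    have hquery : ∀ x ∈ node hiso (i :: t), ∃ a c : X,
        x ∈ Set.Ioi a ∩ Set.Iio c ∧ Set.Ioi a ∩ Set.Iio c ⊆ node hiso (i :: t) := by
      intro x hx
      set n := t.length with hn
      have hcx : chain hiso x (n + 1) = i :: t := by
        have := chain_unique hiso x _ hx
        rwa [show (i :: t).length = n + 1 by simp [hn]] at this
      obtain ⟨a, ha1, ha2⟩ := haux' x (n + 1) (b x (n + 1) - 1)
      obtain ⟨c, hc1, hc2⟩ := haux' x (n + 1) (b x (n + 1) + 1)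
      have hax : a < x := (hlt a x).mpr ⟨n + 1, ha1, by rw [ha2]; exact sub_one_lt _⟩
      have hxc : x < c := (hlt x c).mpr ⟨n + 1, fun m hm => (hc1 m hm).symm,
        by rw [hc2]; exact lt_add_one _⟩
      refine ⟨a, c, ⟨hax, hxc⟩, ?_⟩
      rintro z ⟨haz, hzc⟩
      by_cases hcase : ∀ m < n + 1, b z m = b x m
      · have : chain hiso z (n + 1) = chain hiso x (n + 1) := (hceq z x (n + 1)).mpr hcase
        have := chain_mem hiso z (n + 1)
        rwa [‹chain hiso z (n + 1) = chain hiso x (n + 1)›, hcx] at this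
      · push_neg at hcase
        obtain ⟨m, hm, hmne⟩ := hcase
        have hex : ∃ k, b z k ≠ b x k := ⟨m, hmne⟩
        set m0 := Nat.find hex with hm0
        have hm0le : m0 < n + 1 := lt_of_le_of_lt (Nat.find_le hmne) hm
        have hm0ne : b z m0 ≠ b x m0 := Nat.find_spec hex
        have hm0min : ∀ k < m0, b z k = b x k := fun k hk =>
          not_not.mp (Nat.find_min hex hk)
        rcases lt_or_gt_of_ne hm0ne with hlt' | hgt'
        · exfalso
          have : z < a := (hlt z a).mpr ⟨m0, fun k hk => by
              rw [hm0min k hk, ha1 k (hk.trans hm0le)],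
            by rw [ha1 m0 hm0le]; exact hlt'⟩
          exact lt_asymm haz this
        · exfalso
          have : c < z := (hlt c z).mpr ⟨m0, fun k hk => by
              rw [hc1 k (hk.trans hm0le), hm0min k hk],
            by rw [hc1 m0 hm0le]; exact hgt'⟩
          exact lt_asymm hzc this
    have heq : node hiso (i :: t) =
        ⋃₀ {s : Set X | (∃ a c : X, s = Set.Ioi a ∩ Set.Iio c) ∧ s ⊆ node hiso (i :: t)} := by
      apply Set.Subset.antisymm
      · intro x hx
        obtain ⟨a, c, hmem, hsub⟩ := hquery x hx
        exact ⟨Set.Ioi a ∩ Set.Iio c, ⟨⟨a, c, rfl⟩, hsub⟩, hmem⟩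
      · rintro x ⟨s, ⟨_, hsub⟩, hxs⟩
        exact hsub hxs
    rw [heq]
    apply GenerateOpen.sUnion
    rintro s ⟨⟨a, c, rfl⟩, -⟩
    exact GenerateOpen.inter _ _ (GenerateOpen.basic _ ⟨a, Or.inl rfl⟩)
      (GenerateOpen.basic _ ⟨c, Or.inr rfl⟩)
  haveI hOT : OrderTopology X := by
    constructor
    apply le_antisymm
    · exact le_generateFrom_iff_subset_isOpen.mpr hraysOpen
    · rw [TopologicalSpace.le_def]
      intro U hU
      show GenerateOpen rays U
      have heq : U = ⋃₀ {s : Set X | (∃ (i : ℤ) (t : List ℤ), s = node hiso (i :: t)) ∧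
          s ⊆ U} := by
        apply Set.Subset.antisymm
        · intro x hx
          obtain ⟨ε, hε, hball⟩ := Metric.isOpen_iff.mp hU x hx
          obtain ⟨N, hN⟩ := exists_pow_lt_of_lt_one hε (show (1/2 : ℝ) < 1 by norm_num)
          refine ⟨node hiso (chain hiso x (N + 1)),
            ⟨⟨b x N, chain hiso x N, by rw [chain_succ]⟩, ?_⟩, chain_mem hiso x (N + 1)⟩
          intro y hy
          apply hball
          have hsm := node_small hiso (b x N) (chain hiso x N)
          rw [chain_length] at hsm
          rw [← chain_succ] at hsm
          have hd : dist y x ≤ (1/2 : ℝ) ^ (N + 1) := hsm y hy x (chain_mem hiso x (N + 1))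
          have h12 : (1/2 : ℝ) ^ (N + 1) ≤ (1/2 : ℝ) ^ N := by
            apply pow_le_pow_of_le_one (by norm_num) (by norm_num) (Nat.le_succ N)
          exact lt_of_le_of_lt hd (lt_of_le_of_lt h12 hN)
        · rintro x ⟨s, ⟨_, hsub⟩, hxs⟩
          exact hsub hxs
      rw [heq]
      apply GenerateOpen.sUnion
      rintro s ⟨⟨i, t, rfl⟩, -⟩
      exact hnodeGen i t
  obtain ⟨e⟩ := Order.iso_of_countable_dense X ℚ
  exact ⟨e.toHomeomorph⟩
end Stmt3

/-- (Sierpiński) Every (nonempty) countable, second-countable,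
metrizable topological space with no isolated points is homeomorphic to `ℚ`
with its order topology. -/
theorem stmt3 {X : Type*} [TopologicalSpace X] [Countable X]
    [SecondCountableTopology X] [TopologicalSpace.MetrizableSpace X]
    [Nonempty X] (hiso : ∀ x : X, Filter.NeBot (nhdsWithin x {x}ᶜ)) :
    Nonempty (X ≃ₜ ℚ) := by
  letI : MetricSpace X := TopologicalSpace.metrizableSpaceMetric X
  exact Stmt3.key hiso
end

section
/- Let K be a field and F/K a Galois extension of degree 3 such that every proper finite separable extension of K (inside a fixed separable closure) contains F. Then the Galois group of any finite Galois extension of K is cyclic of order a power of 3. -/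
/-!
Let `M/K` be finite Galois with `M ≠ K` and `G = Gal(M/K)`. Since `F/K` is normal, all
`K`-embeddings of `F` into `M` have the same image `F₁`, and by hypothesis `F₁` lies in every
intermediate field `E ≠ K`. By the Galois correspondence, the fixing group `N` of `F₁`, of
index `[F₁ : K] = 3`, is then a unique maximal subgroup of `G`: it contains every proper
subgroup. An element outside `N` therefore generates `G`, and a Sylow `3`-subgroup, whose index
is prime to `3`, cannot lie in `N`, so it is all of `G`.
-/

section UniqueMaximalSubgroup

variable {G : Type*} [Group G] {N : Subgroup G}

theorem isCyclic_of_forall_ne_top_le (hN : N ≠ ⊤)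
    (hmax : ∀ H : Subgroup G, H ≠ ⊤ → H ≤ N) : IsCyclic G := by
  obtain ⟨g, hg⟩ : ∃ g, g ∉ N := by simpa [SetLike.ext_iff] using hN
  refine isCyclic_iff_exists_zpowers_eq_top.mpr ⟨g, ?_⟩
  by_contra hne
  exact hg (hmax _ hne (Subgroup.mem_zpowers g))

theorem IsPGroup.of_index_eq_of_forall_ne_top_le [Finite G] {p : ℕ} [Fact p.Prime]
    (hN : N.index = p) (hmax : ∀ H : Subgroup G, H ≠ ⊤ → H ≤ N) : IsPGroup p G := by
  obtain ⟨P⟩ : Nonempty (Sylow p G) := inferInstance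
  have hP : P.toSubgroup = ⊤ := by
    by_contra hne
    have hdvd := Subgroup.index_dvd_of_le (hmax _ hne)
    rw [hN] at hdvd
    exact P.not_dvd_index hdvd
  exact (hP ▸ P.isPGroup').of_equiv Subgroup.topEquiv

end UniqueMaximalSubgroup

theorem AlgHom.fieldRange_eq_of_normal {K F M : Type*} [Field K] [Field F] [Field M]
    [Algebra K F] [Algebra K M] [Normal K F] (f g : F →ₐ[K] M) :
    g.fieldRange = f.fieldRange := by
  let e : F ≃ₐ[K] f.fieldRange := AlgEquiv.ofInjectiveField f
  have : Normal K f.fieldRange := Normal.of_algEquiv e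
  rw [← (g.comp e.symm.toAlgHom).fieldRange_of_normal, ← AlgHom.map_fieldRange,
    AlgEquiv.fieldRange_eq_top, ← AlgHom.fieldRange_eq_map]

section EmbeddedNormalExtension

variable {K F M : Type*} [Field K] [Field F] [Field M] [Algebra K F] [Algebra K M]
  (f : F →ₐ[K] M)

theorem AlgHom.fieldRange_le_of_forall_ne_bot [Normal K F]
    (hF : ∀ E : IntermediateField K M, E ≠ ⊥ → Nonempty (F →ₐ[K] E))
    {E : IntermediateField K M} (hE : E ≠ ⊥) : f.fieldRange ≤ E := by
  obtain ⟨g⟩ := hF E hE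
  rw [← f.fieldRange_eq_of_normal (E.val.comp g)]
  rintro _ ⟨x, rfl⟩
  exact (g x).2

theorem AlgHom.le_fixingSubgroup_fieldRange_of_ne_top [Normal K F] [FiniteDimensional K M]
    (hF : ∀ E : IntermediateField K M, E ≠ ⊥ → Nonempty (F →ₐ[K] E))
    {H : Subgroup (M ≃ₐ[K] M)} (hH : H ≠ ⊤) : H ≤ f.fieldRange.fixingSubgroup := by
  rw [← IntermediateField.le_iff_le]
  refine f.fieldRange_le_of_forall_ne_bot hF fun hbot => hH ?_
  rw [← IntermediateField.fixingSubgroup_fixedField H, hbot, IntermediateField.fixingSubgroup_bot]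

theorem AlgHom.index_fixingSubgroup_fieldRange [IsGalois K M] :
    f.fieldRange.fixingSubgroup.index = Module.finrank K F := by
  rw [← IntermediateField.finrank_eq_fixingSubgroup_index]
  exact (AlgEquiv.ofInjectiveField f).toLinearEquiv.finrank_eq.symm

end EmbeddedNormalExtension

/-- Let `F/K` be a Galois extension of degree 3 such that every
proper finite separable extension of `K` contains (a copy of) `F`.  Then the
Galois group of any finite Galois extension of `K` is cyclic of 3-power order. -/
theorem stmt5 (K F : Type) [Field K] [Field F] [Algebra K F] [IsGalois K F]
    (h3 : Module.finrank K F = 3)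
    (hmin : ∀ (L : Type) [Field L] [Algebra K L] [FiniteDimensional K L]
      [Algebra.IsSeparable K L], Module.finrank K L ≠ 1 → Nonempty (F →ₐ[K] L)) :
    ∀ (M : Type) [Field M] [Algebra K M] [FiniteDimensional K M] [IsGalois K M],
      IsCyclic (M ≃ₐ[K] M) ∧ ∃ n : ℕ, Nat.card (M ≃ₐ[K] M) = 3 ^ n := by
  intro M _ _ _ _
  rcases eq_or_ne (Module.finrank K M) 1 with h1 | h1
  · have hcard : Nat.card (M ≃ₐ[K] M) = 1 := by rw [IsGalois.card_aut_eq_finrank, h1]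
    have := (Nat.card_eq_one_iff_unique.mp hcard).1
    exact ⟨isCyclic_of_subsingleton, 0, hcard⟩
  obtain ⟨f⟩ := hmin M h1
  have hF (E : IntermediateField K M) (hE : E ≠ ⊥) : Nonempty (F →ₐ[K] E) :=
    hmin E (IntermediateField.finrank_eq_one_iff.not.mpr hE)
  have hmax (H : Subgroup (M ≃ₐ[K] M)) (hH : H ≠ ⊤) : H ≤ f.fieldRange.fixingSubgroup :=
    f.le_fixingSubgroup_fieldRange_of_ne_top hF hH
  have hindex : f.fieldRange.fixingSubgroup.index = 3 := f.index_fixingSubgroup_fieldRange.trans h3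
  have : Fact (Nat.Prime 3) := ⟨Nat.prime_three⟩
  refine ⟨isCyclic_of_forall_ne_top_le (fun htop => ?_) hmax,
    IsPGroup.iff_card.mp (IsPGroup.of_index_eq_of_forall_ne_top_le hindex hmax)⟩
  simp [htop] at hindex
end

section
/- If R is a subring of ℝ that is a henselian local ring, then R is a field. -/
open Polynomial

/-- If a subring of `ℝ` is a henselian local ring, then it is a
field. -/
theorem stmt8 (R : Subring ℝ) [HenselianLocalRing R] : IsField R := by
  rw [IsLocalRing.isField_iff_maximalIdeal_eq]
  by_contra hne
  obtain ⟨β, hβm, hβ0⟩ : ∃ β ∈ IsLocalRing.maximalIdeal R, β ≠ 0 := by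
    by_contra h
    push_neg at h
    exact hne ((Submodule.eq_bot_iff _).mpr h)
  -- get b in maximal ideal with (b:ℝ) > 1/4
  have hβ0' : |(β : ℝ)| > 0 := abs_pos.mpr (by exact_mod_cast Subtype.coe_injective.ne hβ0)
  obtain ⟨n, hn⟩ := exists_nat_gt ((1/4) / |(β : ℝ)|)
  set β' : R := if (0:ℝ) < (β:ℝ) then β else -β with hβ'def
  have hβ'm : β' ∈ IsLocalRing.maximalIdeal R := by
    rw [hβ'def]; split_ifs
    · exact hβm
    · exact neg_mem hβm
  have hβ'abs : (β' : ℝ) = |(β : ℝ)| := by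
    by_cases h : (0:ℝ) < (β:ℝ)
    · simp [hβ'def, h, abs_of_pos h]
    · push_neg at h
      rw [hβ'def, if_neg (not_lt.mpr h), abs_of_nonpos h]
      rfl
  set b : R := (n : R) * β' with hbdef
  have hbm : b ∈ IsLocalRing.maximalIdeal R := Ideal.mul_mem_left _ _ hβ'm
  have hb : (1/4 : ℝ) < (b : ℝ) := by
    have : (1/4 : ℝ) < n * |(β : ℝ)| := by
      rw [div_lt_iff₀ hβ0'] at hn; linarith
    rw [hbdef]; push_cast; rw [hβ'abs]; exact this
  -- the polynomial X^2 - X + C b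
  set f : R[X] := X ^ 2 - X + C b with hfdef
  have hmonic : f.Monic := by
    have : f = X ^ 2 + (-X + C b) := by ring
    rw [this]
    refine monic_X_pow_add ?_
    apply lt_of_le_of_lt (degree_add_le _ _)
    rw [degree_neg, degree_X]
    exact max_lt (by decide) (lt_of_le_of_lt degree_C_le (by decide))
  have heval0 : f.eval 0 ∈ IsLocalRing.maximalIdeal R := by
    simp [hfdef, hbm]
  have hderiv : IsUnit (f.derivative.eval 0) := by
    have : f.derivative.eval 0 = -1 := by
      simp [hfdef, derivative_add, derivative_sub]
    rw [this]
    exact isUnit_one.neg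
  obtain ⟨a, ha, -⟩ := HenselianLocalRing.is_henselian f hmonic 0 heval0 hderiv
  have : (a : R) ^ 2 - a + b = 0 := by
    have := ha
    simpa [hfdef, IsRoot] using this
  have hr : (a : ℝ) ^ 2 - (a : ℝ) + (b : ℝ) = 0 := by
    exact_mod_cast congrArg (Subtype.val) this
  nlinarith [sq_nonneg ((a : ℝ) - 1/2)]
end

section
/- Let K be a field, n, m ≥ 1, and identify the set of monic polynomials of degree d over K with K^d via coefficients. The multiplication map from (monic degree n) × (monic degree m) to (monic degree n+m) is a polynomial map, and its Jacobian determinant at a pair (g, h) equals, up to sign, the resultant of g and h. -/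
open Polynomial

/-- The monic polynomial `x^n + a_{n-1}x^{n-1} + ⋯ + a_0` with lower
coefficient vector `a : Fin n → R`. -/
noncomputable def monicOfCoeffs {R : Type*} [CommRing R] (n : ℕ) (a : Fin n → R) :
    Polynomial R :=
  X ^ n + ∑ i : Fin n, C (a i) * X ^ (i : ℕ)

/-- The multiplication map on (lower coefficients of) monic polynomials:
`((a₀,…,a_{n-1}), (b₀,…,b_{m-1})) ↦` the lower coefficients of the product. -/
noncomputable def monicMul {K : Type*} [Field K] (n m : ℕ)
    (a : Fin n → K) (b : Fin m → K) : Fin (n + m) → K :=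
  fun k => (monicOfCoeffs n a * monicOfCoeffs m b).coeff k

/-- The `k`-th coordinate of the multiplication map, as a (multivariate)
polynomial in the variables `a_i, b_j`. -/
noncomputable def monicMulPoly (K : Type*) [Field K] (n m : ℕ) (k : Fin (n + m)) :
    MvPolynomial (Fin n ⊕ Fin m) K :=
  (monicOfCoeffs n (fun i => MvPolynomial.X (Sum.inl i)) *
    monicOfCoeffs m (fun j => MvPolynomial.X (Sum.inr j))).coeff k

/-- The Jacobian matrix of the multiplication map at the pair `(g, h)` given by
coefficient vectors `a`, `b`: the matrix of partial derivatives of the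
coefficients of `g * h` with respect to the `a_i` and `b_j`. -/
noncomputable def monicMulJacobian {K : Type*} [Field K] (n m : ℕ)
    (a : Fin n → K) (b : Fin m → K) : Matrix (Fin (n + m)) (Fin (n + m)) K :=
  fun k l => MvPolynomial.eval (Sum.elim a b)
    (MvPolynomial.pderiv (finSumFinEquiv.symm l) (monicMulPoly K n m k))

/-- The Sylvester matrix of the pair of monic polynomials `(g, h)` given by
lower coefficient vectors `a : Fin n → K` and `b : Fin m → K`:
`n` shifted copies of the coefficients of `h` and `m` shifted copies of the
coefficients of `g`. -/
noncomputable def sylvesterMatrix {K : Type*} [Field K] (n m : ℕ)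
    (a : Fin n → K) (b : Fin m → K) : Matrix (Fin (n + m)) (Fin (n + m)) K :=
  fun i l =>
    Sum.elim
      (fun j : Fin n => if (j : ℕ) ≤ (i : ℕ)
        then (monicOfCoeffs m b).coeff ((i : ℕ) - (j : ℕ)) else 0)
      (fun j : Fin m => if (j : ℕ) ≤ (i : ℕ)
        then (monicOfCoeffs n a).coeff ((i : ℕ) - (j : ℕ)) else 0)
      (finSumFinEquiv.symm l)

/-! The Jacobian is not merely a row permutation of the Sylvester matrix: the two coincide.
Since `g h` is affine in the coefficients of `g`, the derivative of `(g h)_k` in `a_j` is the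
`k`-th coefficient of `X ^ j * h`, which is `h_{k-j}` (or `0` when `j > k`) — the `(k, j)`
entry of the Sylvester matrix; symmetrically for the `b_j`. -/

section CommRing

variable {R : Type*} [CommRing R] {n : ℕ}

lemma coeff_monicOfCoeffs (a : Fin n → R) (i : ℕ) :
    (monicOfCoeffs n a).coeff i =
      (if i = n then 1 else 0) + (if h : i < n then a ⟨i, h⟩ else 0) := by
  simp only [monicOfCoeffs, coeff_add, coeff_X_pow, finsetSum_coeff, coeff_C_mul]
  congr 1
  split_ifs with h
  · rw [Finset.sum_eq_single ⟨i, h⟩ (fun j _ hj => ?_) (by simp)]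
    · simp
    · simp [Fin.ext_iff] at hj
      simp [Ne.symm hj]
  · exact Finset.sum_eq_zero fun j _ => by simp [show i ≠ j by omega]

lemma map_monicOfCoeffs {S : Type*} [CommRing S] (f : R →+* S) (a : Fin n → R) :
    (monicOfCoeffs n a).map f = monicOfCoeffs n (f ∘ a) := by
  simp [monicOfCoeffs, Polynomial.map_sum]

end CommRing

namespace Derivation

variable {R A : Type*} [CommSemiring R] [CommRing A] [Algebra R A] (D : Derivation R A A)
  {n : ℕ}

lemma apply_coeff_monicOfCoeffs_eq_zero {x : Fin n → A} (hx : ∀ i, D (x i) = 0) (t : ℕ) :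
    D ((monicOfCoeffs n x).coeff t) = 0 := by
  rw [coeff_monicOfCoeffs, map_add]
  split_ifs <;> simp [hx]

lemma apply_coeff_X_pow_mul_eq_zero {q : A[X]} (hq : ∀ t, D (q.coeff t) = 0) (i t : ℕ) :
    D ((X ^ i * q).coeff t) = 0 := by
  rw [coeff_X_pow_mul']
  split_ifs <;> simp [hq]

lemma apply_coeff_monicOfCoeffs_mul (x : Fin n → A) {q : A[X]}
    (hq : ∀ t, D (q.coeff t) = 0) (k : ℕ) :
    D ((monicOfCoeffs n x * q).coeff k) = ∑ i, D (x i) * (X ^ (i : ℕ) * q).coeff k := by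
  simp only [monicOfCoeffs, add_mul, Finset.sum_mul, mul_assoc, coeff_add, finsetSum_coeff,
    coeff_C_mul, map_add, map_sum, leibniz, smul_eq_mul,
    D.apply_coeff_X_pow_mul_eq_zero hq, mul_zero, zero_add]
  exact Finset.sum_congr rfl fun i _ => mul_comm _ _

end Derivation

section Generic

open MvPolynomial (pderiv pderiv_X pderiv_X_of_ne)

variable (K : Type*) {σ : Type*} [CommRing K] {n : ℕ}

noncomputable def genericMonic (v : Fin n → σ) : (MvPolynomial σ K)[X] :=
  monicOfCoeffs n fun i => MvPolynomial.X (v i)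

variable {K}

lemma map_eval_genericMonic (f : σ → K) (v : Fin n → σ) :
    (genericMonic K v).map (MvPolynomial.eval f) = monicOfCoeffs n (f ∘ v) := by
  rw [genericMonic, map_monicOfCoeffs]
  congr 1
  funext i
  simp

lemma pderiv_coeff_genericMonic {s : σ} {v : Fin n → σ} (hs : s ∉ Set.range v) (t : ℕ) :
    pderiv s ((genericMonic K v).coeff t) = 0 := by
  refine (pderiv (R := K) s).apply_coeff_monicOfCoeffs_eq_zero (fun i => ?_) t
  exact pderiv_X_of_ne fun h => hs ⟨i, h⟩

lemma pderiv_coeff_genericMonic_mul {v : Fin n → σ} (hv : Function.Injective v) (j : Fin n)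
    {q : (MvPolynomial σ K)[X]} (hq : ∀ t, pderiv (v j) (q.coeff t) = 0) (k : ℕ) :
    pderiv (v j) ((genericMonic K v * q).coeff k) = (X ^ (j : ℕ) * q).coeff k := by
  classical
  rw [genericMonic, Derivation.apply_coeff_monicOfCoeffs_mul _ _ hq]
  simp [pderiv_X, Pi.single_apply, hv.eq_iff]

end Generic

section Jacobian

variable {K : Type*} [Field K] {n m : ℕ} (a : Fin n → K) (b : Fin m → K)

lemma monicMulPoly_eq_coeff_genericMonic_mul (k : Fin (n + m)) :
    monicMulPoly K n m k = (genericMonic K Sum.inl * genericMonic K Sum.inr).coeff k :=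
  rfl

lemma eval_monicMulPoly (k : Fin (n + m)) :
    MvPolynomial.eval (Sum.elim a b) (monicMulPoly K n m k) = monicMul n m a b k := by
  rw [monicMulPoly_eq_coeff_genericMonic_mul, ← coeff_map, Polynomial.map_mul,
    map_eval_genericMonic, map_eval_genericMonic, Sum.elim_comp_inl, Sum.elim_comp_inr, monicMul]

lemma monicMulJacobian_inl (k : Fin (n + m)) (j : Fin n) :
    monicMulJacobian n m a b k (finSumFinEquiv (.inl j)) =
      (X ^ (j : ℕ) * monicOfCoeffs m b).coeff k := by
  rw [monicMulJacobian, Equiv.symm_apply_apply, monicMulPoly_eq_coeff_genericMonic_mul,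
    pderiv_coeff_genericMonic_mul Sum.inl_injective j
      (pderiv_coeff_genericMonic (by simp)),
    ← coeff_map, Polynomial.map_mul, Polynomial.map_pow, map_X, map_eval_genericMonic,
    Sum.elim_comp_inr]

lemma monicMulJacobian_inr (k : Fin (n + m)) (j : Fin m) :
    monicMulJacobian n m a b k (finSumFinEquiv (.inr j)) =
      (X ^ (j : ℕ) * monicOfCoeffs n a).coeff k := by
  rw [monicMulJacobian, Equiv.symm_apply_apply, monicMulPoly_eq_coeff_genericMonic_mul,
    mul_comm,
    pderiv_coeff_genericMonic_mul Sum.inr_injective j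
      (pderiv_coeff_genericMonic (by simp)),
    ← coeff_map, Polynomial.map_mul, Polynomial.map_pow, map_X, map_eval_genericMonic,
    Sum.elim_comp_inl]

theorem monicMulJacobian_eq_sylvesterMatrix :
    monicMulJacobian n m a b = sylvesterMatrix n m a b := by
  ext k l
  obtain ⟨j | j, rfl⟩ := finSumFinEquiv.surjective l
  · rw [monicMulJacobian_inl, coeff_X_pow_mul']
    simp [sylvesterMatrix]
  · rw [monicMulJacobian_inr, coeff_X_pow_mul']
    simp [sylvesterMatrix]

end Jacobian

theorem stmt14_general {K : Type*} [Field K] (n m : ℕ) :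
    (∀ (a : Fin n → K) (b : Fin m → K) (k : Fin (n + m)),
      monicMul n m a b k = MvPolynomial.eval (Sum.elim a b) (monicMulPoly K n m k)) ∧
    (∀ (a : Fin n → K) (b : Fin m → K),
      (monicMulJacobian n m a b).det = (sylvesterMatrix n m a b).det ∨
      (monicMulJacobian n m a b).det = -(sylvesterMatrix n m a b).det) :=
  ⟨fun a b k => (eval_monicMulPoly a b k).symm,
    fun a b => .inl (by rw [monicMulJacobian_eq_sylvesterMatrix])⟩

/-- The multiplication map on monic polynomials (in coefficient
coordinates) is a polynomial map, and its Jacobian determinant at any pair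
`(g, h)` equals, up to sign, the resultant of `g` and `h` (the determinant of
their Sylvester matrix). -/
theorem stmt14 {K : Type*} [Field K] (n m : ℕ) (hn : 1 ≤ n) (hm : 1 ≤ m) :
    (∀ (a : Fin n → K) (b : Fin m → K) (k : Fin (n + m)),
      monicMul n m a b k = MvPolynomial.eval (Sum.elim a b) (monicMulPoly K n m k)) ∧
    (∀ (a : Fin n → K) (b : Fin m → K),
      (monicMulJacobian n m a b).det = (sylvesterMatrix n m a b).det ∨
      (monicMulJacobian n m a b).det = -(sylvesterMatrix n m a b).det) :=
  stmt14_general n m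
end

section
/- Let K be a field of characteristic p > 0, and let f ∈ K[x] be a monic polynomial of degree m. Fix k with p^k > m. If a ∈ K^alg is a root of the polynomial f₂ obtained from f by raising all coefficients to the p^k-th power, then a lies in the separable closure of K, and [K(a) : K] ≤ m. -/
open Polynomial

/-- Let `K` be a field of characteristic `p > 0`, `f ∈ K[x]`
monic of degree `m`, and `k` with `p^k > m`.  If `a` in an algebraic closure of
`K` is a root of the polynomial `f₂` obtained from `f` by raising all
coefficients to the `p^k`-th power, then `a` is separable over `K` and
`[K(a) : K] ≤ m` (i.e. the minimal polynomial of `a` has degree at most `m`). -/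
theorem stmt15 (K : Type*) [Field K] (p : ℕ) [Fact p.Prime] [CharP K p]
    (f : K[X]) (hf : f.Monic) (m : ℕ) (hdeg : f.natDegree = m)
    (k : ℕ) (hk : m < p ^ k)
    (a : AlgebraicClosure K)
    (ha : (Polynomial.aeval a)
      (f.sum fun i c => C (c ^ p ^ k) * X ^ i) = 0) :
    IsSeparable K a ∧ (minpoly K a).natDegree ≤ m := by
  have hp : p.Prime := Fact.out
  have hpL : CharP (AlgebraicClosure K) p := charP_of_injective_algebraMap (algebraMap K (AlgebraicClosure K)).injective p
  -- the twisted polynomial is `f.map φ` for the iterated Frobenius `φ`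
  set φ : K →+* K := iterateFrobenius K p k with hφ
  have hmap : (f.sum fun i c => C (c ^ p ^ k) * X ^ i) = f.map φ := by
    rw [Polynomial.map, eval₂_eq_sum]
    simp [hφ, iterateFrobenius_def]
  rw [hmap] at ha
  -- `f₂ := f.map φ` is monic of degree `m`
  have hf₂ : (f.map φ).Monic := hf.map φ
  have hdeg₂ : (f.map φ).natDegree = m := by
    rw [hf.natDegree_map, hdeg]
  -- degree bound
  have hdvd : minpoly K a ∣ f.map φ := minpoly.dvd K a ha
  have hdegle : (minpoly K a).natDegree ≤ m := by
    rw [← hdeg₂]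
    exact natDegree_le_of_dvd hdvd hf₂.ne_zero
  refine ⟨?_, hdegle⟩
  -- find `b` with `b ^ p ^ k = a` and `f b = 0`
  obtain ⟨b, hb⟩ := IsAlgClosed.exists_pow_nat_eq a (n := p ^ k) (pow_pos hp.pos k)
  have hroot : (aeval b) f = 0 := by
    have hψ : (iterateFrobenius (AlgebraicClosure K) p k) ((aeval b) f) = 0 := by
      rw [aeval_def, hom_eval₂, iterateFrobenius_def, hb, ← ha, aeval_def, eval₂_map]
      congr 1
      ext x
      simp [hφ, iterateFrobenius_def, map_pow]
    rw [iterateFrobenius_def] at hψ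
    exact pow_eq_zero_iff (pow_pos hp.pos k).ne' |>.mp hψ
  -- work over the separable closure
  set S := separableClosure K (AlgebraicClosure K)
  haveI : IsPurelyInseparable S (AlgebraicClosure K) := separableClosure.isPurelyInseparable K (AlgebraicClosure K)
  haveI : CharP S p := charP_of_injective_algebraMap (algebraMap K S).injective p
  haveI : ExpChar S p := ExpChar.prime hp
  obtain ⟨j, c, hmin⟩ := IsPurelyInseparable.minpoly_eq_X_pow_sub_C S p b
  -- `b` is integral over `K`, hence over `S`, with minpoly of degree ≤ m
  have hintK : IsIntegral K b := ⟨f, hf, by rwa [← aeval_def]⟩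
  have hdvdS : minpoly S b ∣ f.map (algebraMap K S) :=
    minpoly.dvd S b (by rw [aeval_map_algebraMap]; exact hroot)
  have hjm : p ^ j ≤ m := by
    have h1 : (minpoly S b).natDegree ≤ m := by
      rw [← hdeg, ← hf.natDegree_map (algebraMap K S)]
      exact natDegree_le_of_dvd hdvdS (hf.map (algebraMap K S)).ne_zero
    rwa [hmin, natDegree_X_pow_sub_C] at h1
  have hjk : j < k := by
    by_contra h
    exact absurd (hjm.trans_lt hk) (not_lt.mpr (Nat.pow_le_pow_right hp.pos (not_lt.mp h)))
  -- `b ^ p ^ j = c` lies in `S`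
  have hbc : b ^ p ^ j = algebraMap S (AlgebraicClosure K) c := by
    have := minpoly.aeval S b
    rw [hmin] at this
    simpa [sub_eq_zero] using this
  -- so `a = c ^ p ^ (k - j)` lies in `S`
  have hk' : p ^ j * p ^ (k - j) = p ^ k := by
    rw [← pow_add, Nat.add_sub_cancel' hjk.le]
  have haS : a ∈ S := by
    have : a = algebraMap S (AlgebraicClosure K) (c ^ p ^ (k - j)) := by
      rw [← hb, ← hk', pow_mul, hbc, ← map_pow]
    rw [this]
    exact (c ^ p ^ (k - j)).2
  exact haS
end

section
/- If G is a profinite group that is topologically finitely generated, then for every n, G has only finitely many open subgroups of index n. -/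
/-!
A subgroup `H` of index `n` is the stabilizer of a point under a homomorphism
`G →* Perm (Fin n)` (the action on `G ⧸ H`), and such a homomorphism is determined on the
subgroup generated by `S` by its values on the finite set `S`. So there are only finitely many
possible traces `H ∩ ⟨S⟩`; an open subgroup is closed, hence is the closure of its trace on
the dense subgroup `⟨S⟩`. Compactness makes every open subgroup of finite index, so `n ≠ 0`.
-/

open MulAction

theorem Subgroup.exists_eq_comap_stabilizer {G : Type*} [Group G] (H : Subgroup G) {n : ℕ}
    (hH : H.index = n) (hn : n ≠ 0) :
    ∃ (φ : G →* Equiv.Perm (Fin n)) (i : Fin n),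
      H = (stabilizer (Equiv.Perm (Fin n)) i).comap φ := by
  have hcard : Nat.card (G ⧸ H) = n := H.index_eq_card ▸ hH
  have : Finite (G ⧸ H) := Nat.finite_of_card_ne_zero (hcard ▸ hn)
  let e : G ⧸ H ≃ Fin n := Finite.equivFinOfCardEq hcard
  refine ⟨e.permCongrHom.toMonoidHom.comp (toPermHom G (G ⧸ H)), e ((1 : G) : G ⧸ H), ?_⟩
  ext g
  simp [Equiv.permCongr_apply, QuotientGroup.eq]

theorem Subgroup.index_ne_zero_of_isOpen {G : Type*} [Group G] [TopologicalSpace G]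
    [SeparatelyContinuousMul G] [CompactSpace G] {H : Subgroup G} (hH : IsOpen (H : Set G)) :
    H.index ≠ 0 :=
  have := H.quotient_finite_of_isOpen hH
  H.index_ne_zero_of_finite

theorem Subgroup.le_of_isOpen_of_dense {G : Type*} [Group G] [TopologicalSpace G]
    [SeparatelyContinuousMul G] {H K : Subgroup G} (hH : IsOpen (H : Set G))
    (hK : IsOpen (K : Set G)) {D : Set G} (hD : Dense D) (hHK : ∀ d ∈ D, d ∈ H → d ∈ K) :
    H ≤ K :=
  calc (H : Set G) ⊆ _root_.closure (H ∩ D) := hD.open_subset_closure_inter hH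
    _ ⊆ _root_.closure K := _root_.closure_mono fun d hd => hHK d hd.2 hd.1
    _ = K := (K.isClosed_of_isOpen hK).closure_eq

theorem stmt18_general (G : Type*) [Group G] [TopologicalSpace G] [IsTopologicalGroup G]
    [CompactSpace G]
    (S : Finset G) (hS : Dense ((Subgroup.closure (S : Set G) : Subgroup G) : Set G))
    (n : ℕ) :
    {H : Subgroup G | IsOpen (H : Set G) ∧ H.index = n}.Finite := by
  set T := {H : Subgroup G | IsOpen (H : Set G) ∧ H.index = n}
  choose φ i hφ using fun H : T =>
    H.1.exists_eq_comap_stabilizer H.2.2 (H.2.2 ▸ Subgroup.index_ne_zero_of_isOpen H.2.1)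
  refine Set.finite_coe_iff.mp (Finite.of_injective (fun H : T => (fun s : S => φ H s, i H)) ?_)
  intro H K hHK
  simp only [Prod.mk.injEq, funext_iff, Subtype.forall] at hHK
  obtain ⟨hφS, hi⟩ := hHK
  have hmem : ∀ d ∈ Subgroup.closure (S : Set G), d ∈ H.1 ↔ d ∈ K.1 := fun d hd => by
    rw [hφ H, hφ K, Subgroup.mem_comap, Subgroup.mem_comap,
      MonoidHom.eqOn_closure hφS hd, hi]
  exact Subtype.ext <| le_antisymm
    (Subgroup.le_of_isOpen_of_dense H.2.1 K.2.1 hS fun d hd => (hmem d hd).1)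
    (Subgroup.le_of_isOpen_of_dense K.2.1 H.2.1 hS fun d hd => (hmem d hd).2)

/-- A topologically finitely generated profinite group has only
finitely many open subgroups of any given index `n`. -/
theorem stmt18 (G : Type*) [Group G] [TopologicalSpace G] [IsTopologicalGroup G]
    [CompactSpace G] [T2Space G] [TotallyDisconnectedSpace G]
    (S : Finset G) (hS : Dense ((Subgroup.closure (S : Set G) : Subgroup G) : Set G))
    (n : ℕ) :
    {H : Subgroup G | IsOpen (H : Set G) ∧ H.index = n}.Finite :=
  stmt18_general G S hS n
end
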